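/- arXiv:2310.08818 — 4 statements merged into one kernel-verified Lean document; each statement's English description precedes it below -/
import Mathlib

section
/- Let n ≥ 2 be an integer, let mℓ ≤ 0 and mr ≥ 1 be real numbers, let d_1, …, d_{n−1} be positive real numbers, let t_2, …, t_{n−1} be real numbers each satisfying t_j ≤ 0 or t_j ≥ 1, and let λ̄_1, …, λ̄_{n−1} be real numbers. If B_j^− ≤ λ̄_j ≤ B_j^+ for every 1 ≤ j ≤ n−1, then for every s ∈ [0,1] one has mℓ ≤ S_n(s) ≤ mr. -/
/-!
With `c_k = (s - t_k) / d_k`, one has `S_n(s) = s + s (s - 1) R_1 / d_1` for the Horner tails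
`R_{n-1} = λ̄_{n-1}`, `R_j = λ̄_j + c_{j+1} R_{j+1}`. For `s ∈ [0, 1]` the factor `s - t_{j+1}` is a
fraction in `[0, 1]` of `c = 1 - t_{j+1}` (if `t_{j+1} ≤ 0`) or of `c = -t_{j+1}` (if `t_{j+1} ≥ 1`),
and the recursion for `B^±` says precisely that multiplying by `c / d_{j+1}` maps
`[B_{j+1}^-, B_{j+1}^+]` onto `[B_j^- - λ̄_j, B_j^+ - λ̄_j]`, an interval containing `0`. So downward
induction gives `R_j ∈ [B_j^-, B_j^+]`, in particular `R_1 / d_1 ∈ [3 - 4 mr, 1 - 4 mℓ]`, and then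
`S_n(s) - mℓ ≥ s² - mℓ (2s - 1)²` and `mr - S_n(s) ≥ (1 - s)² + (mr - 1)(2s - 1)²`.
-/

/-- The expanded normalized Newton form
`S_n(s) = s + Σ_{j=1}^{n−1} (λ̄_j / (d_1⋯d_j)) · s·(s−1) · Π_{k=2}^{j} (s − t_k)`. -/
noncomputable def Sn (n : ℕ) (d t lam : ℕ → ℝ) (s : ℝ) : ℝ :=
  s + ∑ j ∈ Finset.Icc 1 (n - 1),
    (lam j / ∏ k ∈ Finset.Icc 1 j, d k) * (s * (s - 1)) * ∏ k ∈ Finset.Icc 2 j, (s - t k)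

open Set

def newtonTail {R : Type*} [CommSemiring R] (N : ℕ) (a c : ℕ → R) (j : ℕ) : R :=
  ∑ i ∈ Finset.Icc j N, a i * ∏ k ∈ Finset.Ioc j i, c k

section newtonTail

variable {R : Type*} [CommSemiring R] (N : ℕ) (a c : ℕ → R)

theorem newtonTail_self : newtonTail N a c N = a N := by
  simp [newtonTail]

theorem newtonTail_eq_add_mul {j : ℕ} (hj : j < N) :
    newtonTail N a c j = a j + c (j + 1) * newtonTail N a c (j + 1) := by
  rw [newtonTail, Finset.Icc_eq_cons_Ioc hj.le, Finset.sum_cons, Finset.Ioc_self,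
    Finset.prod_empty, mul_one, ← Finset.Icc_add_one_left_eq_Ioc, newtonTail, Finset.mul_sum]
  congr 1
  refine Finset.sum_congr rfl fun i hi => ?_
  rw [← Finset.Icc_add_one_left_eq_Ioc, Finset.Icc_eq_cons_Ioc (Finset.mem_Icc.1 hi).1,
    Finset.prod_cons]
  ring

end newtonTail

theorem Sn_eq_newtonTail (n : ℕ) (d t lam : ℕ → ℝ) (s : ℝ) :
    Sn n d t lam s =
      s + s * (s - 1) * (newtonTail (n - 1) lam (fun k => (s - t k) / d k) 1 / d 1) := by
  rw [Sn, newtonTail, Finset.sum_div, Finset.mul_sum]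
  congr 1
  refine Finset.sum_congr rfl fun j hj => ?_
  have hIcc : Finset.Icc 2 j = Finset.Ioc 1 j := Finset.Icc_add_one_left_eq_Ioc 1 j
  rw [Finset.Icc_eq_cons_Ioc (Finset.mem_Icc.1 hj).1, Finset.prod_cons, Finset.prod_div_distrib,
    hIcc]
  ring

theorem add_mul_mem_Icc_of_mul_mem {lo hi lam θ y : ℝ} (hlam : lam ∈ Icc lo hi)
    (hθ : θ ∈ Icc 0 1) (hy : y ∈ Icc (lo - lam) (hi - lam)) :
    lam + θ * y ∈ Icc lo hi := by
  have h0 : (0 : ℝ) ∈ Icc (lo - lam) (hi - lam) := ⟨by linarith [hlam.1], by linarith [hlam.2]⟩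
  exact add_mem_Icc_iff_right.2 ((convex_Icc _ _).smul_mem_of_zero_mem h0 hy hθ)

theorem div_mul_mem_uIcc {a b c d x : ℝ} (hc : c ≠ 0) (hd : d ≠ 0)
    (hx : x ∈ uIcc (a * d / c) (b * d / c)) : c / d * x ∈ uIcc a b := by
  have key : ∀ e, c / d * (e * d / c) = e := fun e => by field_simp
  simpa only [image_const_mul_uIcc, key] using mem_image_of_mem (c / d * ·) hx

theorem add_div_mul_mem_Icc {lo hi lo' hi' lam s t d x : ℝ} (hs : s ∈ Icc 0 1) (hd : 0 < d)
    (ht : t ≤ 0 ∨ 1 ≤ t) (hlam : lam ∈ Icc lo hi)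
    (hrec : (t ≤ 0 → lo' = (lo - lam) * d / (1 - t) ∧ hi' = (hi - lam) * d / (1 - t)) ∧
      (1 ≤ t → lo' = (hi - lam) * d / (-t) ∧ hi' = (lo - lam) * d / (-t)))
    (hx : x ∈ Icc lo' hi') :
    lam + (s - t) / d * x ∈ Icc lo hi := by
  suffices ∃ c ≠ 0, (s - t) / c ∈ Icc 0 1 ∧ x ∈ uIcc ((lo - lam) * d / c) ((hi - lam) * d / c) by
    obtain ⟨c, hc, hθ, hxc⟩ := this
    have hy := div_mul_mem_uIcc hc hd.ne' hxc
    rw [uIcc_of_le (by linarith [hlam.1, hlam.2])] at hy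
    convert add_mul_mem_Icc_of_mul_mem hlam hθ hy using 2
    field_simp
  rcases ht with ht | ht
  · obtain ⟨rfl, rfl⟩ := hrec.1 ht
    refine ⟨1 - t, by linarith, ⟨div_nonneg ?_ ?_, (div_le_one ?_).2 ?_⟩, Icc_subset_uIcc hx⟩ <;>
      linarith [hs.1, hs.2]
  · obtain ⟨rfl, rfl⟩ := hrec.2 ht
    refine ⟨-t, by linarith, ⟨div_nonneg_of_nonpos ?_ ?_, (div_le_one_of_neg ?_).2 ?_⟩,
      Icc_subset_uIcc' hx⟩ <;> linarith [hs.1, hs.2]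

theorem newtonTail_mem_Icc {N : ℕ} {d t lam Bm Bp : ℕ → ℝ} {s : ℝ} (hs : s ∈ Icc 0 1)
    (hd : ∀ j, 1 ≤ j → j ≤ N → 0 < d j)
    (ht : ∀ j, 2 ≤ j → j ≤ N → t j ≤ 0 ∨ 1 ≤ t j)
    (hBrec : ∀ j, 2 ≤ j → j ≤ N →
      (t j ≤ 0 →
        Bm j = (Bm (j - 1) - lam (j - 1)) * d j / (1 - t j) ∧
        Bp j = (Bp (j - 1) - lam (j - 1)) * d j / (1 - t j)) ∧
      (1 ≤ t j →
        Bm j = (Bp (j - 1) - lam (j - 1)) * d j / (-t j) ∧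
        Bp j = (Bm (j - 1) - lam (j - 1)) * d j / (-t j)))
    (hlam : ∀ j, 1 ≤ j → j ≤ N → Bm j ≤ lam j ∧ lam j ≤ Bp j)
    {j : ℕ} (hj : 1 ≤ j) (hjN : j ≤ N) :
    newtonTail N lam (fun k => (s - t k) / d k) j ∈ Icc (Bm j) (Bp j) := by
  induction hjN using Nat.decreasingInduction with
  | self => rw [newtonTail_self]; exact hlam N hj le_rfl
  | of_succ k hk ih =>
    have hrec := hBrec (k + 1) (by omega) hk
    rw [Nat.add_sub_cancel] at hrec
    rw [newtonTail_eq_add_mul _ _ _ hk]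
    exact add_div_mul_mem_Icc hs (hd _ (by omega) hk) (ht _ (by omega) hk) (hlam k hj hk.le)
      hrec (ih (by omega))

theorem self_add_mul_sub_one_mul_mem_Icc {ml mr s q : ℝ} (hml : ml ≤ 0) (hmr : 1 ≤ mr)
    (hs : s ∈ Icc 0 1) (hq : q ∈ Icc (-4 * (mr - 1) - 1) (-4 * ml + 1)) :
    s + s * (s - 1) * q ∈ Icc ml mr := by
  have hss : s * (s - 1) ≤ 0 := mul_nonpos_of_nonneg_of_nonpos hs.1 (by linarith [hs.2])
  constructor
  · nlinarith [mul_le_mul_of_nonpos_left hq.2 hss, sq_nonneg s,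
      mul_nonneg (neg_nonneg.2 hml) (sq_nonneg (2 * s - 1))]
  · nlinarith [mul_le_mul_of_nonpos_left hq.1 hss, sq_nonneg (s - 1),
      mul_nonneg (sub_nonneg.2 hmr) (sq_nonneg (2 * s - 1))]

/-- Positivity-preserving bound recursion: if the scaled divided-difference ratios `λ̄_j`
lie within the recursively defined bounds `B_j^± (with PPI initialization), then
`mℓ ≤ S_n(s) ≤ mr` on `[0,1]`. -/
theorem ppi_Sn_bounds
    (n : ℕ) (hn : 2 ≤ n)
    (ml mr : ℝ) (hml : ml ≤ 0) (hmr : 1 ≤ mr)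
    (d t lam Bm Bp : ℕ → ℝ)
    (hd : ∀ j, 1 ≤ j → j ≤ n - 1 → 0 < d j)
    (ht : ∀ j, 2 ≤ j → j ≤ n - 1 → t j ≤ 0 ∨ 1 ≤ t j)
    (hBm1 : Bm 1 = (-4 * (mr - 1) - 1) * d 1)
    (hBp1 : Bp 1 = (-4 * ml + 1) * d 1)
    (hBrec : ∀ j, 2 ≤ j → j ≤ n - 1 →
      (t j ≤ 0 →
        Bm j = (Bm (j - 1) - lam (j - 1)) * d j / (1 - t j) ∧
        Bp j = (Bp (j - 1) - lam (j - 1)) * d j / (1 - t j)) ∧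
      (1 ≤ t j →
        Bm j = (Bp (j - 1) - lam (j - 1)) * d j / (-t j) ∧
        Bp j = (Bm (j - 1) - lam (j - 1)) * d j / (-t j)))
    (hlam : ∀ j, 1 ≤ j → j ≤ n - 1 → Bm j ≤ lam j ∧ lam j ≤ Bp j) :
    ∀ s ∈ Set.Icc (0 : ℝ) 1, ml ≤ Sn n d t lam s ∧ Sn n d t lam s ≤ mr := by
  intro s hs
  have hd1 : 0 < d 1 := hd 1 le_rfl (by omega)
  obtain ⟨hlo, hhi⟩ := newtonTail_mem_Icc hs hd ht hBrec hlam le_rfl (by omega : 1 ≤ n - 1)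
  rw [hBm1, ← le_div_iff₀ hd1] at hlo
  rw [hBp1, ← div_le_iff₀ hd1] at hhi
  rw [Sn_eq_newtonTail]
  exact self_add_mul_sub_one_mul_mem_Icc hml hmr hs ⟨hlo, hhi⟩
end

section
/- Let d > 0, mℓ ≤ 0, and mr ≥ 1 be real numbers, and let λ be a real number satisfying (−4(mr−1) − 1)·d ≤ λ ≤ (−4·mℓ + 1)·d. Then for every s ∈ [0,1], mℓ ≤ s + (s(s−1)/d)·λ ≤ mr. -/
/-- Quadratic truncation of the nested Newton form: if
`(−4(mr−1) − 1)·d ≤ λ ≤ (−4·mℓ + 1)·d`, then `mℓ ≤ s + (s(s−1)/d)·λ ≤ mr` on `[0,1]`. -/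
theorem quad_ppi_bound (d ml mr lam : ℝ) (hd : 0 < d) (hml : ml ≤ 0) (hmr : 1 ≤ mr)
    (hlo : (-4 * (mr - 1) - 1) * d ≤ lam) (hhi : lam ≤ (-4 * ml + 1) * d) :
    ∀ s ∈ Set.Icc (0 : ℝ) 1,
      ml ≤ s + (s * (s - 1) / d) * lam ∧ s + (s * (s - 1) / d) * lam ≤ mr := by
  intro s hs
  obtain ⟨h0, h1⟩ := hs
  have hrw : s + (s * (s - 1) / d) * lam = (s * d + s * (s - 1) * lam) / d := by
    field_simp
  have ht : 0 ≤ s * (1 - s) := mul_nonneg h0 (by linarith)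
  have ht4 : 4 * (s * (1 - s)) ≤ 1 := by nlinarith [sq_nonneg (2*s - 1)]
  constructor
  · rw [hrw, le_div_iff₀ hd]
    nlinarith [mul_nonneg ht (sub_nonneg.2 hhi),
      mul_nonneg (mul_nonneg h0 (by linarith : (0:ℝ) ≤ 1 - s)) hd.le,
      mul_nonneg (mul_nonneg (neg_nonneg.2 hml) hd.le)
        (by linarith : (0:ℝ) ≤ 1 - 4*(s*(1-s))),
      mul_nonneg hd.le (mul_self_nonneg s)]
  · rw [hrw, div_le_iff₀ hd]
    nlinarith [mul_nonneg ht (sub_nonneg.2 hlo),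
      mul_nonneg hd.le (mul_self_nonneg (1-s)),
      mul_nonneg (mul_nonneg (sub_nonneg.2 hmr) hd.le)
        (by linarith : (0:ℝ) ≤ 1 - 4*(s*(1-s)))]
end

section
/- Let A, B, μ, d, t, F be real numbers with A ≤ μ ≤ B, d > 0, and t ≥ 1. If (B − μ)·d/(−t) ≤ F ≤ (A − μ)·d/(−t), then for every s ∈ [0,1], A ≤ μ + ((s − t)/d)·F ≤ B. -/
/-- Inductive step (right stencil point, `t ≥ 1`): if `A ≤ μ ≤ B` and
`(B − μ)·d/(−t) ≤ F ≤ (A − μ)·d/(−t)`, then `A ≤ μ + ((s − t)/d)·F ≤ B` on `[0,1]`. -/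
theorem nested_step_right (A B mu d t F : ℝ)
    (hA : A ≤ mu) (hB : mu ≤ B) (hd : 0 < d) (ht : 1 ≤ t)
    (hlo : (B - mu) * d / (-t) ≤ F) (hhi : F ≤ (A - mu) * d / (-t)) :
    ∀ s ∈ Set.Icc (0 : ℝ) 1, A ≤ mu + ((s - t) / d) * F ∧ mu + ((s - t) / d) * F ≤ B := by
  intro s hs
  obtain ⟨hs0, hs1⟩ := hs
  have ht0 : (0:ℝ) < t := lt_of_lt_of_le one_pos ht
  have hnt : (-t:ℝ) < 0 := by linarith
  -- clear divisions in hypotheses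
  have h1 : -((B - mu) * d) ≤ F * t := by
    have := (div_le_iff_of_neg hnt).mp hlo
    nlinarith [this]
  have h2 : F * t ≤ -((A - mu) * d) := by
    have := (le_div_iff_of_neg hnt).mp hhi
    nlinarith [this]
  have hst : s - t ≤ 0 := by linarith
  constructor
  · have key : A - mu ≤ (s - t) / d * F := by
      rw [div_mul_eq_mul_div, le_div_iff₀ hd]
      nlinarith [mul_nonneg (sub_nonneg.mpr hA) (sub_nonneg.mpr hs0),
        mul_nonneg hs0 (sub_nonneg.mpr hA)]
    linarith
  · have key : (s - t) / d * F ≤ B - mu := by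
      rw [div_mul_eq_mul_div, div_le_iff₀ hd]
      nlinarith [mul_nonneg (sub_nonneg.mpr hB) hs0]
    linarith
end

section
/- Under the adaptive-stencil mesh setup, assume u_{i+1} ≠ u_i. Then for every real x, the degree-n Newton interpolant satisfies U_n(x) = u_i + (u_{i+1} − u_i)·S_n(s(x)), where s(x) = (x − x_i)/(x_{i+1} − x_i) and S_n(s) = s + Σ_{j=1}^{n−1} (λ̄_j / (d_1⋯d_j)) · s·(s−1) · Π_{k=2}^{j} (s − t_k) (the product over k from 2 to j being empty, equal to 1, when j = 1). -/
/-- Divided differences over consecutive nodes: `divdiff x u k m = U[x_k, …, x_{k+m}]`. -/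
noncomputable def divdiff (x u : ℕ → ℝ) : ℕ → ℕ → ℝ
  | k, 0 => u k
  | k, m + 1 => (divdiff x u (k + 1) m - divdiff x u k m) / (x (k + m + 1) - x k)

/-- `stMin e j = min{e_0, …, e_j}`. -/
def stMin (e : ℕ → ℕ) (j : ℕ) : ℕ := (Finset.range (j + 1)).inf' Finset.nonempty_range_add_one e

/-- `stMax e j = max{e_0, …, e_j}`. -/
def stMax (e : ℕ → ℕ) (j : ℕ) : ℕ := (Finset.range (j + 1)).sup' Finset.nonempty_range_add_one e

/-- `U[V_j]`: the divided difference over the consecutive nodes of the stencil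
`V_j = {e_0, …, e_{j+1}}`, from its leftmost node `x_j^l` to its rightmost node `x_j^r`. -/
noncomputable def UV (x u : ℕ → ℝ) (e : ℕ → ℕ) (j : ℕ) : ℝ :=
  divdiff x u (stMin e (j + 1)) (stMax e (j + 1) - stMin e (j + 1))

/-- The Newton interpolant of degree `n` on the adaptive stencil:
`U_n(y) = u_i + Σ_{j=0}^{n−1} U[V_j] · Π_{k=0}^{j} (y − x_{e_k})`. -/
noncomputable def Un (x u : ℕ → ℝ) (e : ℕ → ℕ) (i n : ℕ) (y : ℝ) : ℝ :=
  u i + ∑ j ∈ Finset.range n, UV x u e j * ∏ k ∈ Finset.range (j + 1), (y - x (e k))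

/-- Normalized stencil width `d_j = (x_j^r − x_j^l)/(x_{i+1} − x_i)`. -/
noncomputable def dN (x : ℕ → ℝ) (e : ℕ → ℕ) (i j : ℕ) : ℝ :=
  (x (stMax e (j + 1)) - x (stMin e (j + 1))) / (x (i + 1) - x i)

/-- Normalized position `t_j = (x_{e_j} − x_i)/(x_{i+1} − x_i)` of the added stencil point. -/
noncomputable def tN (x : ℕ → ℝ) (e : ℕ → ℕ) (i j : ℕ) : ℝ :=
  (x (e j) - x i) / (x (i + 1) - x i)

/-- Scaled divided-difference ratio
`λ̄_j = (U[V_j]/U[x_i, x_{i+1}]) · Π_{k=1}^{j} (x_k^r − x_k^l)`. -/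
noncomputable def lamBar (x u : ℕ → ℝ) (e : ℕ → ℕ) (i j : ℕ) : ℝ :=
  (UV x u e j / divdiff x u i 1) *
    ∏ k ∈ Finset.Icc 1 j, (x (stMax e (k + 1)) - x (stMin e (k + 1)))

/-!
Put `h = x_{i+1} - x_i` and `s = (y - x_i)/h`. Each nodal factor becomes
`y - x_{e_k} = h (s - t_k)`, with `t_0 = 0` and `t_1 = 1`, so the `j`-th Newton term is
`U[V_j] h^{j+1} s (s - 1) ∏_{k=2}^{j} (s - t_k)`. Since `d_1⋯d_j = W_j / h^j` with
`W_j = ∏_{k=1}^{j} (x_k^r - x_k^l) ≠ 0` (every stencil contains `x_i < x_{i+1}` and the nodes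
increase), the widths cancel: `λ̄_j / (d_1⋯d_j) = U[V_j] h^j / U[x_i, x_{i+1}]`, and
`U[x_i, x_{i+1}] = (u_{i+1} - u_i)/h` supplies the factor `u_{i+1} - u_i`.
-/

open Finset

section Stencil

variable (e : ℕ → ℕ) {j k : ℕ}

theorem stMin_le (hk : k ≤ j) : stMin e j ≤ e k :=
  inf'_le e (mem_range.2 (by omega))

theorem le_stMax (hk : k ≤ j) : e k ≤ stMax e j :=
  le_sup' e (mem_range.2 (by omega))

theorem stMax_le {M : ℕ} (h : ∀ k ≤ j, e k ≤ M) : stMax e j ≤ M :=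
  sup'_le _ _ fun k hk => h k (Nat.lt_succ_iff.1 (mem_range.1 hk))

theorem stMin_one : stMin e 1 = min (e 0) (e 1) := by
  simp [stMin, range_add_one, min_comm]

theorem stMax_one : stMax e 1 = max (e 0) (e 1) := by
  simp [stMax, range_add_one, max_comm]

theorem apply_stMin_lt_apply_stMax {N : ℕ} {x : ℕ → ℝ} (hx : StrictMonoOn x (Set.Iic N))
    (h01 : e 0 < e 1) (heN : ∀ k ≤ j, e k ≤ N) (hj : 1 ≤ j) :
    x (stMin e j) < x (stMax e j) := by
  have hmax : stMax e j ≤ N := stMax_le e heN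
  refine hx (Set.mem_Iic.2 ?_) (Set.mem_Iic.2 hmax) ?_
  · exact (stMin_le e (Nat.zero_le j)).trans (heN 0 (Nat.zero_le j))
  · exact (stMin_le e (Nat.zero_le j)).trans_lt (h01.trans_le (le_stMax e hj))

end Stencil

theorem divdiff_one (x u : ℕ → ℝ) (k : ℕ) :
    divdiff x u k 1 = (u (k + 1) - u k) / (x (k + 1) - x k) := by
  simp [divdiff]

theorem UV_zero (x u : ℕ → ℝ) {e : ℕ → ℕ} {i : ℕ} (he0 : e 0 = i)
    (he1 : e 1 = i + 1) :
    UV x u e 0 = divdiff x u i 1 := by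
  simp [UV, stMin_one, stMax_one, he0, he1]

theorem Finset.prod_range_succ_eq_mul_mul_prod_Icc {M : Type*} [CommMonoid M]
    (f : ℕ → M) {j : ℕ} (hj : 1 ≤ j) :
    ∏ k ∈ range (j + 1), f k = f 0 * f 1 * ∏ k ∈ Icc 2 j, f k := by
  rw [prod_range_eq_mul_Ico f j.succ_pos, prod_eq_prod_Ico_succ_bot (by omega), mul_assoc,
    Nat.succ_eq_add_one, Ico_add_one_right_eq_Icc]

theorem Finset.prod_sub_eq_pow_card_mul_prod {ι K : Type*} [Field K] (s : Finset ι)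
    (z : ι → K) (a y : K) {h : K} (hh : h ≠ 0) :
    ∏ k ∈ s, (y - z k) = h ^ #s * ∏ k ∈ s, ((y - a) / h - (z k - a) / h) := by
  rw [pow_card_mul_prod]
  refine prod_congr rfl fun k _ => ?_
  field_simp
  ring

section NormalizedNewtonForm

variable (x u : ℕ → ℝ) (e : ℕ → ℕ) (i : ℕ) {j : ℕ}

theorem lamBar_div_prod_dN (hh : x (i + 1) - x i ≠ 0)
    (hW : ∏ k ∈ Icc 1 j, (x (stMax e (k + 1)) - x (stMin e (k + 1))) ≠ 0) :
    lamBar x u e i j / ∏ k ∈ Icc 1 j, dN x e i k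
      = UV x u e j / divdiff x u i 1 * (x (i + 1) - x i) ^ j := by
  simp only [lamBar, dN]
  rw [prod_div_distrib, prod_const, Nat.card_Icc, Nat.add_sub_cancel]
  field_simp

theorem UV_mul_prod_sub_eq_normalized {y : ℝ} (he0 : e 0 = i) (he1 : e 1 = i + 1)
    (hh : x (i + 1) - x i ≠ 0) (hu : u (i + 1) - u i ≠ 0)
    (hW : ∏ k ∈ Icc 1 j, (x (stMax e (k + 1)) - x (stMin e (k + 1))) ≠ 0) (hj : 1 ≤ j) :
    UV x u e j * ∏ k ∈ range (j + 1), (y - x (e k))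
      = (u (i + 1) - u i) * ((lamBar x u e i j / ∏ k ∈ Icc 1 j, dN x e i k) *
          ((y - x i) / (x (i + 1) - x i) * ((y - x i) / (x (i + 1) - x i) - 1)) *
          ∏ k ∈ Icc 2 j, ((y - x i) / (x (i + 1) - x i) - tN x e i k)) := by
  rw [lamBar_div_prod_dN x u e i hh hW, divdiff_one,
    prod_sub_eq_pow_card_mul_prod _ _ (x i) y hh, prod_range_succ_eq_mul_mul_prod_Icc _ hj,
    card_range, he0, he1]
  simp only [tN]
  field_simp
  ring

end NormalizedNewtonForm

theorem newton_factored_form_general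
    (N n i : ℕ) (hn : 2 ≤ n) (hiN : i + 1 ≤ N)
    (x u : ℕ → ℝ)
    (hx : ∀ k, k < N → x k < x (k + 1))
    (e : ℕ → ℕ)
    (he0 : e 0 = i) (he1 : e 1 = i + 1)
    (heN : ∀ j, j ≤ n → e j ≤ N)
    (hu : u (i + 1) ≠ u i) :
    ∀ y : ℝ,
      Un x u e i n y =
        u i + (u (i + 1) - u i) *
          Sn n (dN x e i) (tN x e i) (lamBar x u e i) ((y - x i) / (x (i + 1) - x i)) := by
  intro y
  have hh : x (i + 1) - x i ≠ 0 := (sub_pos.2 (hx i hiN)).ne'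
  have hmono : StrictMonoOn x (Set.Iic N) := strictMonoOn_Iic_of_lt_succ hx
  obtain ⟨m, rfl⟩ : ∃ m, n = m + 1 := ⟨n - 1, by omega⟩
  have hW : ∀ j ≤ m, ∏ k ∈ Icc 1 j, (x (stMax e (k + 1)) - x (stMin e (k + 1))) ≠ 0 :=
    fun j hj => prod_ne_zero_iff.2 fun k hk => sub_ne_zero.2
      (apply_stMin_lt_apply_stMax e hmono (he0 ▸ he1 ▸ i.lt_succ_self)
        (fun l hl => heN l (by simp only [mem_Icc] at hk; omega)) (by omega)).ne'
  rw [Un, Sn, sum_range_eq_add_Ico _ m.succ_pos, Nat.succ_eq_add_one, Ico_add_one_right_eq_Icc,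
    Nat.add_sub_cancel, mul_add, mul_sum]
  congr 2
  · rw [UV_zero x u he0 he1, divdiff_one, prod_range_one, he0]
    field_simp
  · refine sum_congr rfl fun j hj => ?_
    rw [mem_Icc] at hj
    exact UV_mul_prod_sub_eq_normalized x u e i he0 he1 hh (sub_ne_zero.2 hu) (hW j hj.2) hj.1

/-- Under the adaptive-stencil mesh setup with `u_{i+1} ≠ u_i`, the Newton interpolant
factors as `U_n(x) = u_i + (u_{i+1} − u_i)·S_n(s(x))` with `s(x) = (x − x_i)/(x_{i+1} − x_i)`. -/
theorem newton_factored_form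
    (N n i : ℕ) (hn : 2 ≤ n) (hiN : i + 1 ≤ N)
    (x u : ℕ → ℝ)
    (hx : ∀ k, k < N → x k < x (k + 1))
    (e : ℕ → ℕ)
    (he0 : e 0 = i) (he1 : e 1 = i + 1)
    (heN : ∀ j, j ≤ n → e j ≤ N)
    (heStep : ∀ j, 2 ≤ j → j ≤ n →
      e j + 1 = stMin e (j - 1) ∨ e j = stMax e (j - 1) + 1)
    (hu : u (i + 1) ≠ u i) :
    ∀ y : ℝ,
      Un x u e i n y =
        u i + (u (i + 1) - u i) *
          Sn n (dN x e i) (tN x e i) (lamBar x u e i) ((y - x i) / (x (i + 1) - x i)) :=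
  newton_factored_form_general N n i hn hiN x u hx e he0 he1 heN hu
end
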